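/- Let t be an even integer with 2 ≤ t ≤ 8, let L be an even lattice, and let Λ = L ⊕ ℤe be the orthogonal direct sum with q(e) = −t. If z = t·x + b·e with x ∈ L and b an integer satisfying |b| ≤ t/2, and if q(z) < 0, then q(x) ≤ 0, and the rank-2 sublattice of Λ spanned by z and e is negative semidefinite, its Gram determinant being −t³·q(x) ≥ 0. -/

import Mathlib

open LinearMap (BilinForm)

/-- A vector of a `ℤ`-module is primitive if `v = m • w` forces `m = ±1`. -/
def IsPrimitiveVec {M : Type*} [AddCommGroup M] [Module ℤ M] (v : M) : Prop :=
  ∀ (m : ℤ) (w : M), v = m • w → m = 1 ∨ m = -1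

/-- The bilinear form is symmetric. -/
def IsSymmForm {M : Type*} [AddCommGroup M] [Module ℤ M] (B : BilinForm ℤ M) : Prop :=
  ∀ x y : M, B x y = B y x

/-- The lattice is even: every square `q(v) = B v v` is even. -/
def IsEvenForm {M : Type*} [AddCommGroup M] [Module ℤ M] (B : BilinForm ℤ M) : Prop :=
  ∀ x : M, Even (B x x)

/-- The lattice is unimodular: `v ↦ B v ·` is an isomorphism onto the dual module. -/
def IsUnimodularForm {M : Type*} [AddCommGroup M] [Module ℤ M] (B : BilinForm ℤ M) : Prop :=
  Function.Bijective fun v : M => B v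

/-- The lattice is nondegenerate. -/
def IsNondegForm {M : Type*} [AddCommGroup M] [Module ℤ M] (B : BilinForm ℤ M) : Prop :=
  ∀ v : M, (∀ w : M, B v w = 0) → v = 0

/-- The lattice contains `U ⊕ U` (two orthogonal hyperbolic planes) as an orthogonal
direct summand; since `U ⊕ U` is unimodular this is equivalent to containing vectors
with the appropriate Gram matrix. -/
def ContainsUU {M : Type*} [AddCommGroup M] [Module ℤ M] (B : BilinForm ℤ M) : Prop :=
  ∃ u₁ u₂ u₃ u₄ : M,
    B u₁ u₁ = 0 ∧ B u₂ u₂ = 0 ∧ B u₁ u₂ = 1 ∧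
    B u₃ u₃ = 0 ∧ B u₄ u₄ = 0 ∧ B u₃ u₄ = 1 ∧
    B u₁ u₃ = 0 ∧ B u₁ u₄ = 0 ∧ B u₂ u₃ = 0 ∧ B u₂ u₄ = 0

/-- `d` is the divisibility of `z`: the nonnegative generator of the ideal
`{B z w : w ∈ Λ}` of `ℤ`. -/
def IsDivisibility {M : Type*} [AddCommGroup M] [Module ℤ M]
    (B : BilinForm ℤ M) (z : M) (d : ℤ) : Prop :=
  0 ≤ d ∧ (∀ w : M, d ∣ B z w) ∧ ∀ d' : ℤ, (∀ w : M, d' ∣ B z w) → d' ∣ d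

/-- `γ` belongs to the stable orthogonal group `Õ(Λ)`: it is an isometry acting
trivially on the discriminant group `Λ*/Λ`.  For a nondegenerate lattice the dual
lattice `Λ*` is identified with `Hom(Λ, ℤ)` via `v ↦ B(v,·)`, under which `Λ ⊂ Λ*`
becomes the image of `B`; triviality on the discriminant says that for every
functional `f` the difference `f ∘ γ - f` is of the form `B x ·` for some `x ∈ Λ`. -/
def IsStableIsometry {M : Type*} [AddCommGroup M] [Module ℤ M]
    (B : BilinForm ℤ M) (γ : M ≃ₗ[ℤ] M) : Prop :=
  (∀ v w : M, B (γ v) (γ w) = B v w) ∧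
  ∀ f : M →ₗ[ℤ] ℤ, ∃ x : M, ∀ w : M, f (γ w) - f w = B x w

/-- The rank-2 sublattice spanned by `u` and `v` is negative definite. -/
def NegDefPair {M : Type*} [AddCommGroup M] [Module ℤ M]
    (B : BilinForm ℤ M) (u v : M) : Prop :=
  LinearIndependent ℤ ![u, v] ∧
  ∀ w ∈ Submodule.span ℤ ({u, v} : Set M), w ≠ 0 → B w w < 0

/-- The rank-2 sublattice spanned by `u` and `v` is negative semidefinite. -/
def NegSemidefPair {M : Type*} [AddCommGroup M] [Module ℤ M]
    (B : BilinForm ℤ M) (u v : M) : Prop :=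
  LinearIndependent ℤ ![u, v] ∧
  ∀ w ∈ Submodule.span ℤ ({u, v} : Set M), B w w ≤ 0

/-- The Gram determinant of a pair of vectors. -/
def GramDet {M : Type*} [AddCommGroup M] [Module ℤ M]
    (B : BilinForm ℤ M) (u v : M) : ℤ :=
  B u u * B v v - (B u v) ^ 2

/-- The orthogonal direct sum `Λ = L ⊕ ℤe` with `q(e) = -t`, realized on `L × ℤ`
with `e = (0, 1)`. -/
def prodForm {L : Type*} [AddCommGroup L] [Module ℤ L]
    (B : BilinForm ℤ L) (t : ℤ) : BilinForm ℤ (L × ℤ) :=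
  LinearMap.mk₂ ℤ (fun v w => B v.1 w.1 - t * v.2 * w.2)
    (fun v v' w => by simp; ring)
    (fun c v w => by simp; ring)
    (fun v w w' => by simp; ring)
    (fun c v w => by simp; ring)

/-- The lattice contains the hyperbolic plane `U` as an orthogonal direct summand;
since `U` is unimodular this is equivalent to containing two vectors with the
hyperbolic Gram matrix. -/
def ContainsU {M : Type*} [AddCommGroup M] [Module ℤ M] (B : BilinForm ℤ M) : Prop :=
  ∃ u₁ u₂ : M, B u₁ u₁ = 0 ∧ B u₂ u₂ = 0 ∧ B u₁ u₂ = 1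

/-!
Write `z = (y, b)` and `e = (0, 1)`. A vector `a • z + c • e` of the span has square
`a² q(y) - t (a b + c)²`, so the span is negative semidefinite as soon as `q(y) ≤ 0`.
For `y = t • x` the hypothesis `q(z) < 0` reads `t q(x) < b² ≤ t² / 4`, i.e. `q(x) < t / 4 ≤ 2`,
and evenness of `q(x)` leaves only `q(x) ≤ 0`.
-/

section prodForm

variable {L : Type*} [AddCommGroup L] [Module ℤ L] (B : BilinForm ℤ L) (t : ℤ)

theorem prodForm_apply (v w : L × ℤ) : prodForm B t v w = B v.1 w.1 - t * v.2 * w.2 :=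
  rfl

theorem prodForm_smul_add_smul_self (y : L) (b a c : ℤ) :
    prodForm B t (a • (y, b) + c • ((0 : L), (1 : ℤ))) (a • (y, b) + c • ((0 : L), (1 : ℤ))) =
      a ^ 2 * B y y - t * (a * b + c) ^ 2 := by
  simp only [Prod.smul_mk, Int.zsmul_eq_mul, mul_one, Prod.mk_add_mk, prodForm_apply, map_add,
    LinearMap.map_smul_of_tower, map_zero, smul_zero, add_zero, LinearMap.smul_apply]
  ring

theorem prodForm_self_nonpos_of_mem_span_pair {y : L} (b : ℤ) (hy : B y y ≤ 0) (ht : 0 ≤ t)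
    {w : L × ℤ} (hw : w ∈ Submodule.span ℤ ({(y, b), ((0 : L), (1 : ℤ))} : Set (L × ℤ))) :
    prodForm B t w w ≤ 0 := by
  obtain ⟨a, c, rfl⟩ := Submodule.mem_span_pair.mp hw
  rw [prodForm_smul_add_smul_self]
  have : 0 ≤ t * (a * b + c) ^ 2 := by positivity
  nlinarith [sq_nonneg a]

theorem gramDet_prodForm_mk_zero_one (y : L) (b : ℤ) :
    GramDet (prodForm B t) (y, b) ((0 : L), (1 : ℤ)) = -t * B y y := by
  simp only [GramDet, prodForm_apply, map_zero]
  ring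

end prodForm

theorem nonpos_of_even_of_mul_lt_sq {n t b : ℤ} (hn : Even n) (ht : 0 < t) (ht8 : t ≤ 8)
    (hb : 2 * |b| ≤ t) (hnb : t * n < b ^ 2) : n ≤ 0 := by
  have hb2 : 4 * b ^ 2 ≤ t ^ 2 := by nlinarith [abs_nonneg b, sq_abs b]
  have hn2 : 4 * n < t := by nlinarith
  obtain ⟨k, rfl⟩ := hn
  omega

theorem small_t_negsemidef_general
    (t : ℤ) (ht2 : 2 ≤ t) (ht8 : t ≤ 8)
    (L : Type*) [AddCommGroup L] [Module ℤ L]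
    (B : BilinForm ℤ L) (heven : IsEvenForm B)
    (x : L) (b : ℤ) (hb : 2 * |b| ≤ t)
    (hq : prodForm B t ((t • x, b) : L × ℤ) ((t • x, b) : L × ℤ) < 0) :
    B x x ≤ 0 ∧
    (∀ w ∈ Submodule.span ℤ ({((t • x, b) : L × ℤ), ((0 : L), (1 : ℤ))} : Set (L × ℤ)),
      prodForm B t w w ≤ 0) ∧
    GramDet (prodForm B t) ((t • x, b) : L × ℤ) ((0 : L), (1 : ℤ)) = -t ^ 3 * B x x ∧
    0 ≤ -t ^ 3 * B x x := by
  have hsq : B (t • x) (t • x) = t ^ 2 * B x x := by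
    simp only [LinearMap.map_smul_of_tower, LinearMap.smul_apply, smul_eq_mul]
    ring
  have hz : prodForm B t (t • x, b) (t • x, b) = t * (t * B x x - b ^ 2) := by
    rw [prodForm_apply, hsq]
    ring
  have hx : B x x ≤ 0 :=
    nonpos_of_even_of_mul_lt_sq (heven x) (by omega) ht8 hb
      (sub_neg.mp (neg_of_mul_neg_right (hz ▸ hq) (by omega)))
  have htx : B (t • x) (t • x) ≤ 0 := by
    rw [hsq]
    exact mul_nonpos_of_nonneg_of_nonpos (sq_nonneg t) hx
  refine ⟨hx, fun w hw => prodForm_self_nonpos_of_mem_span_pair B t b htx (by omega) hw, ?_, ?_⟩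
  · rw [gramDet_prodForm_mk_zero_one, hsq]
    ring
  · exact mul_nonneg_of_nonpos_of_nonpos (neg_nonpos.mpr (by positivity)) hx

/-- in `Λ = L ⊕ ℤe`, `L` even, `q(e) = -t` with `t` even and
`2 ≤ t ≤ 8`: if `z = t•x + b•e` with `|b| ≤ t/2` (i.e. `2|b| ≤ t`) and `q(z) < 0`,
then `q(x) ≤ 0`, the sublattice spanned by `z` and `e` is negative semidefinite,
and its Gram determinant equals `-t³·q(x) ≥ 0`. -/
theorem small_t_negsemidef
    (t : ℤ) (hteven : Even t) (ht2 : 2 ≤ t) (ht8 : t ≤ 8)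
    (L : Type*) [AddCommGroup L] [Module ℤ L] [Module.Free ℤ L] [Module.Finite ℤ L]
    (B : BilinForm ℤ L) (hsymm : IsSymmForm B) (heven : IsEvenForm B)
    (x : L) (b : ℤ) (hb : 2 * |b| ≤ t)
    (hq : prodForm B t ((t • x, b) : L × ℤ) ((t • x, b) : L × ℤ) < 0) :
    B x x ≤ 0 ∧
    (∀ w ∈ Submodule.span ℤ ({((t • x, b) : L × ℤ), ((0 : L), (1 : ℤ))} : Set (L × ℤ)),
      prodForm B t w w ≤ 0) ∧
    GramDet (prodForm B t) ((t • x, b) : L × ℤ) ((0 : L), (1 : ℤ)) = -t ^ 3 * B x x ∧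
    0 ≤ -t ^ 3 * B x x :=
  small_t_negsemidef_general t ht2 ht8 L B heven x b hb hq
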